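/- For each i with 2 ≤ i ≤ m: if r > 0 then φ^r(a_i) = a_i · a_{i-1} · φ(a_{i-1}) ⋯ φ^{r-1}(a_{i-1}), and if r < 0 then φ^r(a_i) = a_i · φ^{-1}(a_{i-1})^{-1} · φ^{-2}(a_{i-1})^{-1} ⋯ φ^{r}(a_{i-1})^{-1}; furthermore, both of these expressions are freely reduced words. -/

import Mathlib

open FreeGroup SemidirectProduct

/-- Words on the letters `a₁^{±1}, …, a_m^{±1}` (`(i, true)` is `a_{i+1}`,
`(i, false)` is `a_{i+1}⁻¹`, with 0-based `Fin`-indexing of the generators). -/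
abbrev FWord (m : ℕ) := List (Fin m × Bool)

/-- A word is freely reduced. -/
def Reduced {m : ℕ} (w : FWord m) : Prop := FreeGroup.reduce w = w

/-- `φ` is the automorphism of `F = F(a₁, …, a_m)` with `φ(a₁) = a₁` and
`φ(aᵢ) = aᵢ aᵢ₋₁` for `2 ≤ i ≤ m`. -/
def IsHydraAut (m : ℕ) (φ : FreeGroup (Fin m) ≃* FreeGroup (Fin m)) : Prop :=
  ∀ i : Fin m, φ (FreeGroup.of i) =
    if i.val = 0 then FreeGroup.of i
    else FreeGroup.of i *
      FreeGroup.of (⟨i.val - 1, Nat.lt_of_le_of_lt (Nat.sub_le _ _) i.isLt⟩ : Fin m)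

/-- The free-by-cyclic group `H_m = F ⋊_φ ℤ`; here `s = inr (ofAdd 1)` and the defining
relation `s⁻¹ aᵢ s = φ(aᵢ)` holds.  The normal form `ũ s^p` is the element
`⟨ũ, Multiplicative.ofAdd p⟩`. -/
abbrev Hgrp (m : ℕ) (φ : FreeGroup (Fin m) ≃* FreeGroup (Fin m)) :=
  FreeGroup (Fin m) ⋊[zpowersHom (MulAut (FreeGroup (Fin m))) φ⁻¹] Multiplicative ℤ

/-- Letters of words over the generators of `H_m`: `some i` is `a_{i+1}`, `none` is `s`. -/
abbrev HWord (m : ℕ) := List (Option (Fin m) × Bool)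

def hLetter {m : ℕ} (φ : FreeGroup (Fin m) ≃* FreeGroup (Fin m)) (x : Option (Fin m) × Bool) :
    Hgrp m φ :=
  match x.1 with
  | some i => cond x.2 (SemidirectProduct.inl (FreeGroup.of i))
      (SemidirectProduct.inl (FreeGroup.of i))⁻¹
  | none => cond x.2 (SemidirectProduct.inr (Multiplicative.ofAdd (1:ℤ)))
      (SemidirectProduct.inr (Multiplicative.ofAdd (1:ℤ)))⁻¹

/-- The element of `H_m` represented by a word on `a₁^{±1}, …, a_m^{±1}, s^{±1}`. -/
def evalH {m : ℕ} (φ : FreeGroup (Fin m) ≃* FreeGroup (Fin m)) (w : HWord m) : Hgrp m φ :=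
  (w.map (hLetter φ)).prod

/-- Word length in `H_m` w.r.t. the generating set `{a₁, …, a_m, s}`. -/
noncomputable def lenH {m : ℕ} (φ : FreeGroup (Fin m) ≃* FreeGroup (Fin m)) (g : Hgrp m φ) : ℕ :=
  sInf {n | ∃ w : HWord m, evalH φ w = g ∧ w.length = n}

/-- Word length in `F` w.r.t. the generating set `{a₁, …, a_m}`. -/
noncomputable def lenF {m : ℕ} (g : FreeGroup (Fin m)) : ℕ :=
  sInf {n | ∃ w : FWord m, FreeGroup.mk w = g ∧ w.length = n}

/-- The rank of a word: the maximal `i` such that `aᵢ^{±1}` occurs in it (a letter with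
`Fin`-index `j` is `a_{j+1}`, so it contributes `j+1`); the empty word has rank `0`. -/
def wrank {m : ℕ} (w : FWord m) : ℕ := (w.map (fun x => x.1.val + 1)).foldr max 0

/-- The four types of rank-`i` pieces: `aᵢ u`, `u aᵢ⁻¹`, `aᵢ u aᵢ⁻¹`, `u`. -/
inductive PieceType | head | tail | both | plain
deriving DecidableEq

/-- `π` is a rank-`i` piece of the given type: `aᵢ u`, `u aᵢ⁻¹`, `aᵢ u aᵢ⁻¹` or `u`,
where `u` is a (possibly empty) word of rank at most `i - 1`.  Pieces of the first three
types have strict rank `i`. -/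
def IsPieceType {m : ℕ} (i : ℕ) (t : PieceType) (π : FWord m) : Prop :=
  match t with
  | .head => ∃ (x : Fin m × Bool) (u : FWord m),
      π = x :: u ∧ x.1.val + 1 = i ∧ x.2 = true ∧ wrank u < i
  | .tail => ∃ (x : Fin m × Bool) (u : FWord m),
      π = u ++ [x] ∧ x.1.val + 1 = i ∧ x.2 = false ∧ wrank u < i
  | .both => ∃ (j : Fin m) (u : FWord m),
      π = (j, true) :: (u ++ [(j, false)]) ∧ j.val + 1 = i ∧ wrank u < i
  | .plain => wrank π < i

def IsPiece {m : ℕ} (i : ℕ) (π : FWord m) : Prop := ∃ t, IsPieceType i t π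

/-- The rank-`i` piece decomposition of `w`: a decomposition into rank-`i` pieces
with the minimal possible number of pieces. -/
def IsPieceDecomp {m : ℕ} (i : ℕ) (w : FWord m) (L : List (FWord m)) : Prop :=
  L.flatten = w ∧ (∀ π ∈ L, IsPiece i π) ∧
    ∀ L' : List (FWord m), L'.flatten = w → (∀ π ∈ L', IsPiece i π) → L.length ≤ L'.length

/-- The number of pieces in the rank-`i` decomposition of `w`, for `i = wrank w`. -/
noncomputable def piecesCount {m : ℕ} (w : FWord m) : ℕ :=
  sInf {p | ∃ L : List (FWord m),
    L.flatten = w ∧ (∀ π ∈ L, IsPiece (wrank w) π) ∧ L.length = p}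

/-- The number of pieces of an element of the free group. -/
noncomputable def piecesCountF {m : ℕ} (g : FreeGroup (Fin m)) : ℕ :=
  piecesCount (FreeGroup.toWord g)

/-!
Expanding `φ(aᵢ) = aᵢ aᵢ₋₁` and `φ⁻¹(aᵢ) = aᵢ φ⁻¹(aᵢ₋₁)⁻¹` gives both product formulas, so
what has to be shown is that the concatenated words are reduced. For `r > 0` this holds
because `φ` maps positive words to positive words. For `r < 0`, induction on `j` shows
that the reduced word of `φ⁻ⁿ(aⱼ)` begins with `aⱼ` and ends with `aⱼ` or with a letter
of smaller index. Hence each block `φ⁻ˡ(aᵢ₋₁)⁻¹` ends with `aᵢ₋₁⁻¹` and begins with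
`aᵢ₋₁⁻¹` or a letter of smaller index, so nothing cancels where the blocks meet.
-/

namespace MulAut

variable {G : Type*} [Group G] (ψ : MulAut G) {x y : G}

theorem pow_apply_of_apply_eq_mul (h : ψ x = x * y) (r : ℕ) :
    (ψ ^ r) x = x * ((List.range r).map fun l => (ψ ^ l) y).prod := by
  induction r with
  | zero => simp
  | succ r ih =>
    rw [pow_succ, mul_apply, h, _root_.map_mul, ih, List.range_succ, List.map_append,
      List.prod_append, List.map_singleton, List.prod_singleton, mul_assoc]

theorem pow_apply_of_apply_eq_self (h : ψ x = x) (r : ℕ) : (ψ ^ r) x = x := by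
  simpa using ψ.pow_apply_of_apply_eq_mul (y := 1) (by rw [h, mul_one]) r

theorem inv_apply_of_apply_eq_mul (h : ψ x = x * y) : ψ⁻¹ x = x * (ψ⁻¹ y)⁻¹ := by
  rw [inv_def, MulEquiv.symm_apply_eq, _root_.map_mul, _root_.map_inv,
    MulEquiv.apply_symm_apply, h, mul_inv_cancel_right]

end MulAut

namespace FreeGroup

variable {α : Type*}

theorem isReduced_of_forall_snd_eq_true {L : List (α × Bool)} (h : ∀ a ∈ L, a.2 = true) :
    IsReduced L :=
  List.Pairwise.isChain <| List.pairwise_of_forall_mem_list fun a ha b hb _ => by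
    rw [h a ha, h b hb]

theorem getLast?_invRev (L : List (α × Bool)) :
    (invRev L).getLast? = L.head?.map fun a => (a.1, !a.2) := by
  cases L <;> simp [invRev]

theorem head?_invRev (L : List (α × Bool)) :
    (invRev L).head? = L.getLast?.map fun a => (a.1, !a.2) := by
  simp [invRev, List.getLast?_map]

theorem pow_apply_mem_closure_range_of {ψ : MulAut (FreeGroup α)}
    (hψ : ∀ a, ψ (of a) ∈ Submonoid.closure (Set.range of)) {g : FreeGroup α}
    (hg : g ∈ Submonoid.closure (Set.range of)) (n : ℕ) :
    (ψ ^ n) g ∈ Submonoid.closure (Set.range of) := by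
  have hle : Submonoid.closure (Set.range (of : α → FreeGroup α)) ≤
      (Submonoid.closure (Set.range of)).comap ψ.toMonoidHom := by
    rw [Submonoid.closure_le]
    rintro _ ⟨a, rfl⟩
    exact hψ a
  induction n with
  | zero => simpa using hg
  | succ n ih => rw [pow_succ', MulAut.mul_apply]; exact hle ih

variable [DecidableEq α]

theorem forall_snd_toWord_eq_true_of_mem_closure {g : FreeGroup α}
    (hg : g ∈ Submonoid.closure (Set.range of)) : ∀ a ∈ g.toWord, a.2 = true := by
  induction hg using Submonoid.closure_induction with
  | mem _ hg =>
    obtain ⟨a, rfl⟩ := hg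
    simp [toWord_of]
  | one => simp
  | mul g h _ _ hg hh =>
    have hgh : ∀ a ∈ g.toWord ++ h.toWord, a.2 = true := by
      simpa only [List.mem_append] using fun a ha => ha.elim (hg a) (hh a)
    rwa [toWord_mul, (isReduced_of_forall_snd_eq_true hgh).reduce_eq]

theorem mk_flatMap_toWord {β : Type*} (L : List β) (g : β → FreeGroup α) :
    mk (L.flatMap fun b => (g b).toWord) = (L.map g).prod := by
  induction L with
  | nil => rfl
  | cons b L ih => rw [List.flatMap_cons, ← mul_mk, mk_toWord, ih, List.map_cons, List.prod_cons]

theorem mk_cons_flatMap_toWord {ψ : MulAut (FreeGroup α)} {x : α} {y : FreeGroup α}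
    (h : ψ (of x) = of x * y) (r : ℕ) :
    mk ((x, true) :: (List.range r).flatMap fun l => ((ψ ^ l) y).toWord) = (ψ ^ r) (of x) := by
  rw [ψ.pow_apply_of_apply_eq_mul h, ← mk_flatMap_toWord, of, mul_mk, List.singleton_append]

theorem isReduced_cons_flatMap_of_mem_closure {ψ : MulAut (FreeGroup α)}
    (hψ : ∀ a, ψ (of a) ∈ Submonoid.closure (Set.range of)) (x : α) {y : FreeGroup α}
    (hy : y ∈ Submonoid.closure (Set.range of)) (r : ℕ) :
    IsReduced ((x, true) :: (List.range r).flatMap fun l => ((ψ ^ l) y).toWord) := by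
  refine isReduced_of_forall_snd_eq_true fun a ha => ?_
  rcases List.mem_cons.mp ha with rfl | ha
  · rfl
  · obtain ⟨l, -, ha⟩ := List.mem_flatMap.mp ha
    exact forall_snd_toWord_eq_true_of_mem_closure (pow_apply_mem_closure_range_of hψ hy l) a ha

section LinearOrder

variable {α : Type*} [LinearOrder α]

def IsCappedBy (z : α) (w : List (α × Bool)) : Prop :=
  w.head? = some (z, true) ∧ ∀ a ∈ w.getLast?, a.1 < z ∨ a = (z, true)

theorem isReduced_cons_flatMap_inv_of_isCappedBy (ψ : MulAut (FreeGroup α)) {x z : α}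
    (hzx : z < x) (hz : ∀ n, IsCappedBy z ((ψ ^ n) (of z)).toWord) (r : ℕ) :
    IsReduced ((x, true) :: (List.range r).flatMap fun l => ((ψ ^ l) (ψ (of z))⁻¹).toWord) ∧
      ∀ a ∈ ((x, true) :: (List.range r).flatMap
        fun l => ((ψ ^ l) (ψ (of z))⁻¹).toWord).getLast?,
        a = (x, true) ∨ a = (z, false) := by
  induction r with
  | zero => simp [IsReduced.singleton]
  | succ r ih =>
    have hB : ((ψ ^ r) (ψ (of z))⁻¹).toWord = invRev ((ψ ^ (r + 1)) (of z)).toWord := by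
      rw [← toWord_inv, pow_succ, MulAut.mul_apply, _root_.map_inv]
    set B := ((ψ ^ r) (ψ (of z))⁻¹).toWord
    obtain ⟨hhead, hlast⟩ := hz (r + 1)
    have hBlast : B.getLast? = some (z, false) := by rw [hB, getLast?_invRev, hhead]; rfl
    have hBhead : ∀ b ∈ B.head?, b.1 < z ∨ b = (z, false) := by
      rw [hB, head?_invRev]
      intro b hb
      obtain ⟨a, ha, rfl⟩ := Option.map_eq_some_iff.mp hb
      rcases hlast a ha with h | rfl
      exacts [Or.inl h, Or.inr rfl]
    rw [List.range_succ, List.flatMap_append, List.flatMap_singleton, ← List.cons_append]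
    refine ⟨List.isChain_append.mpr ⟨ih.1, isReduced_toWord, fun a ha b hb hab => ?_⟩, ?_⟩
    · rcases ih.2 a ha with rfl | rfl <;> rcases hBhead b hb with h | rfl
      · exact absurd hab (h.trans hzx).ne'
      · exact absurd hab hzx.ne'
      · exact absurd hab.symm h.ne
      · rfl
    · rw [List.getLast?_append, hBlast]
      simp

theorem isCappedBy_toWord_pow_apply {ψ : MulAut (FreeGroup α)} {x z : α} (hzx : z < x)
    (hz : ∀ n, IsCappedBy z ((ψ ^ n) (of z)).toWord) (h : ψ (of x) = of x * (ψ (of z))⁻¹)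
    (n : ℕ) : IsCappedBy x ((ψ ^ n) (of x)).toWord := by
  obtain ⟨hred, hlast⟩ := isReduced_cons_flatMap_inv_of_isCappedBy ψ hzx hz n
  rw [← mk_cons_flatMap_toWord h, toWord_mk, hred.reduce_eq]
  refine ⟨rfl, fun a ha => ?_⟩
  rcases hlast a ha with rfl | rfl
  exacts [Or.inr rfl, Or.inl hzx]

end LinearOrder

end FreeGroup

namespace IsHydraAut

variable {m : ℕ} {φ : FreeGroup (Fin m) ≃* FreeGroup (Fin m)}

theorem apply_of_pred (hφ : IsHydraAut m φ) {x z : Fin m} (hzx : z.val + 1 = x.val) :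
    φ (of x) = of x * of z := by
  rw [hφ x, if_neg (by omega)]
  congr 3
  omega

theorem apply_of_mem_closure (hφ : IsHydraAut m φ) (a : Fin m) :
    φ (of a) ∈ Submonoid.closure (Set.range of) := by
  rw [hφ a]
  split_ifs
  · exact Submonoid.subset_closure ⟨a, rfl⟩
  · exact mul_mem (Submonoid.subset_closure ⟨a, rfl⟩) (Submonoid.subset_closure ⟨_, rfl⟩)

theorem isCappedBy_toWord_inv_pow_apply (hφ : IsHydraAut m φ) (z : Fin m) (n : ℕ) :
    IsCappedBy z ((φ⁻¹ ^ n) (of z)).toWord := by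
  obtain ⟨j, hj⟩ := z
  induction j generalizing n with
  | zero =>
    have h0 : φ⁻¹ (of ⟨0, hj⟩) = of ⟨0, hj⟩ := by
      rw [MulAut.inv_def, MulEquiv.symm_apply_eq, hφ, if_pos rfl]
    rw [MulAut.pow_apply_of_apply_eq_self _ h0, toWord_of]
    exact ⟨rfl, by simp⟩
  | succ j ih =>
    have hzx : (⟨j, by omega⟩ : Fin m) < ⟨j + 1, hj⟩ := Fin.mk_lt_mk.mpr j.lt_succ_self
    exact isCappedBy_toWord_pow_apply hzx (fun n => ih n (by omega))
      (MulAut.inv_apply_of_apply_eq_mul _ (hφ.apply_of_pred rfl)) n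

end IsHydraAut

/-- Lemma 4.3: for `2 ≤ i ≤ m`,
`φ^r(aᵢ) = aᵢ aᵢ₋₁ φ(aᵢ₋₁) ⋯ φ^{r-1}(aᵢ₋₁)` for `r > 0` and
`φ^r(aᵢ) = aᵢ φ⁻¹(aᵢ₋₁)⁻¹ φ⁻²(aᵢ₋₁)⁻¹ ⋯ φ^{r}(aᵢ₋₁)⁻¹` for `r < 0`,
and these expressions are freely reduced words. -/
theorem stmt_9 (m : ℕ)
    (φ : FreeGroup (Fin m) ≃* FreeGroup (Fin m)) (hφ : IsHydraAut m φ)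
    (i : ℕ) (hi : 2 ≤ i) (him : i ≤ m) :
    (∀ r : ℕ, 0 < r →
      Reduced (((⟨i - 1, by omega⟩ : Fin m), true) ::
          (List.range r).flatMap (fun k =>
            FreeGroup.toWord ((φ ^ (k : ℤ)) (FreeGroup.of (⟨i - 2, by omega⟩ : Fin m)))) :
        FWord m) ∧
      FreeGroup.mk (((⟨i - 1, by omega⟩ : Fin m), true) ::
          (List.range r).flatMap (fun k =>
            FreeGroup.toWord ((φ ^ (k : ℤ)) (FreeGroup.of (⟨i - 2, by omega⟩ : Fin m))))) =
        (φ ^ (r : ℤ)) (FreeGroup.of (⟨i - 1, by omega⟩ : Fin m))) ∧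
    (∀ r : ℕ, 0 < r →
      Reduced (((⟨i - 1, by omega⟩ : Fin m), true) ::
          (List.range r).flatMap (fun k =>
            FreeGroup.toWord (((φ ^ (-(k : ℤ) - 1))
              (FreeGroup.of (⟨i - 2, by omega⟩ : Fin m)))⁻¹)) : FWord m) ∧
      FreeGroup.mk (((⟨i - 1, by omega⟩ : Fin m), true) ::
          (List.range r).flatMap (fun k =>
            FreeGroup.toWord (((φ ^ (-(k : ℤ) - 1))
              (FreeGroup.of (⟨i - 2, by omega⟩ : Fin m)))⁻¹))) =
        (φ ^ (-(r : ℤ))) (FreeGroup.of (⟨i - 1, by omega⟩ : Fin m))) := by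
  set x : Fin m := ⟨i - 1, by omega⟩
  set z : Fin m := ⟨i - 2, by omega⟩
  have hzx : z.val + 1 = x.val := by simp only [x, z]; omega
  have hφx : φ (of x) = of x * of z := hφ.apply_of_pred hzx
  have hneg (k : ℕ) :
      ((φ ^ (-(k : ℤ) - 1)) (of z))⁻¹ = (φ⁻¹ ^ k) (φ⁻¹ (of z))⁻¹ := by
    rw [show -(k : ℤ) - 1 = -((k + 1 : ℕ) : ℤ) by push_cast; ring, zpow_neg, zpow_natCast,
      ← inv_pow, pow_succ, MulAut.mul_apply, _root_.map_inv]
  -- the statement coerces `List.range r` to `List ℤ` by a monadic lift, undone here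
  simp only [List.pure_def, List.bind_eq_flatMap, List.flatMap_assoc, List.flatMap_cons,
    List.flatMap_nil, List.append_nil, hneg, zpow_neg, zpow_natCast, ← inv_pow]
  refine ⟨fun r _ => ⟨?_, mk_cons_flatMap_toWord hφx r⟩,
    fun r _ => ⟨?_, mk_cons_flatMap_toWord (MulAut.inv_apply_of_apply_eq_mul _ hφx) r⟩⟩
  · exact (isReduced_cons_flatMap_of_mem_closure hφ.apply_of_mem_closure x
      (Submonoid.subset_closure ⟨z, rfl⟩) r).reduce_eq
  · exact (isReduced_cons_flatMap_inv_of_isCappedBy _ (x := x) (Fin.lt_def.mpr (by omega))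
      (hφ.isCappedBy_toWord_inv_pow_apply z) r).1.reduce_eq
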